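/- Let X and Y be Banach spaces, D ⊆ X a nonempty open connected set, f : D → Y a local homeomorphism, x₀ ∈ D, and let (D_Φ, Φ) be the maximal auxiliary flow for f at x₀. Assume condition (c): for every closed set B bounded in D and every x ∈ B, if Φ(x,t) ∈ B for all t ≥ 0 with (x,t) ∈ D_Φ, then [0,∞) ⊆ I_x. If there exists a global Lyapunov function for Φ, then f is injective on D and f(D) is star-shaped with respect to f(x₀) (for every y ∈ f(D) and s ∈ [0,1], f(x₀) + s(y − f(x₀)) ∈ f(D)). -/

import Mathlib

/-!
Along the auxiliary flow, `f (Φ (x, t))` runs along the segment from `f x` towards `f x₀`.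
A Lyapunov function traps every forward orbit in a closed bounded subset of `D`, so by (c)
all orbits exist for `t ≥ 0`; this alone makes `f(D)` star-shaped. Near `x₀` the flow is
the lift of that segment through a local inverse of `f`, so the set of points whose orbit
enters this chart is open and relatively closed in `D`, hence all of `D`. Two points with
the same image then have the same image under `Φ(·, T)` for large `T`, and `Φ(·, T)` is
injective.
-/

open Set Filter

/-- `f : D → Y` is a local homeomorphism on the open set `D` if every point of `D` has an
open neighbourhood `U ⊆ D` such that `f(U)` is open and `f|U : U → f(U)` is a
homeomorphism. -/
def IsLocalHomeoOn {X Y : Type*} [TopologicalSpace X] [TopologicalSpace Y]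
    (f : X → Y) (D : Set X) : Prop :=
  ∀ x ∈ D, ∃ U : Set X, U ⊆ D ∧ IsOpen U ∧ x ∈ U ∧ IsOpen (f '' U) ∧
    ContinuousOn f U ∧ ∃ g : Y → X, ContinuousOn g (f '' U) ∧
      (∀ u ∈ U, g (f u) = u) ∧ ∀ y ∈ f '' U, g y ∈ U ∧ f (g y) = y

/-- The maximal auxiliary flow `Φ : D_Φ → D` for a map `f : D → Y` at the point `x₀`:
`D_Φ ⊆ D × ℝ` is open, each section `I_x = {t : (x,t) ∈ D_Φ}` is an interval containing
`0`, `Φ(x,0) = x`, the flow law `Φ(Φ(x,t₁),t₂) = Φ(x,t₁+t₂)` holds,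
`f(Φ(x,t)) = f(x₀) + e^{-t}(f(x) - f(x₀))` on `D_Φ`, and `Φ` is maximal among such
liftings. -/
structure AuxFlow {X Y : Type*} [NormedAddCommGroup X] [NormedSpace ℝ X]
    [NormedAddCommGroup Y] [NormedSpace ℝ Y]
    (D : Set X) (f : X → Y) (x₀ : X) where
  dom : Set (X × ℝ)
  flow : X → ℝ → X
  isOpen_dom : IsOpen dom
  dom_subset : ∀ p ∈ dom, p.1 ∈ D
  zero_mem : ∀ x ∈ D, (x, (0 : ℝ)) ∈ dom
  interval : ∀ x ∈ D, Set.OrdConnected {t : ℝ | (x, t) ∈ dom}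
  mem_of_dom : ∀ p ∈ dom, flow p.1 p.2 ∈ D
  continuousOn : ContinuousOn (fun p : X × ℝ => flow p.1 p.2) dom
  flow_zero : ∀ x ∈ D, flow x 0 = x
  flow_add : ∀ (x : X) (t₁ t₂ : ℝ), (x, t₁) ∈ dom → (x, t₁ + t₂) ∈ dom →
    (flow x t₁, t₂) ∈ dom ∧ flow (flow x t₁) t₂ = flow x (t₁ + t₂)
  lifts : ∀ p ∈ dom, f (flow p.1 p.2) = f x₀ + Real.exp (-p.2) • (f p.1 - f x₀)
  maximal : ∀ x ∈ D, ∀ J : Set ℝ, J.OrdConnected → (0 : ℝ) ∈ J →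
    ∀ ψ : ℝ → X, ContinuousOn ψ J → ψ 0 = x →
    (∀ t ∈ J, ψ t ∈ D ∧ f (ψ t) = f x₀ + Real.exp (-t) • (f x - f x₀)) →
    ∀ t ∈ J, (x, t) ∈ dom ∧ ψ t = flow x t

open Metric Topology

theorem IsLocalHomeoOn.continuousOn {X Y : Type*} [TopologicalSpace X] [TopologicalSpace Y]
    {f : X → Y} {D : Set X} (hf : IsLocalHomeoOn f D) : ContinuousOn f D :=
  continuousOn_of_forall_continuousAt fun x hx => by
    obtain ⟨U, -, hU, hxU, -, hfU, -⟩ := hf x hx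
    exact hfU.continuousAt (hU.mem_nhds hxU)

theorem IsLocalHomeoOn.exists_openPartialHomeomorph {X Y : Type*} [TopologicalSpace X]
    [TopologicalSpace Y] {f : X → Y} {D : Set X} (hf : IsLocalHomeoOn f D) {x : X}
    (hx : x ∈ D) : ∃ e : OpenPartialHomeomorph X Y, x ∈ e.source ∧ e.source ⊆ D ∧ f = e := by
  obtain ⟨U, hUD, hU, hxU, hfU, hfc, g, hgc, hgf, hfg⟩ := hf x hx
  let e : OpenPartialHomeomorph X Y :=
    { toFun := f
      invFun := g
      source := U
      target := f '' U
      map_source' := fun u hu => mem_image_of_mem f hu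
      map_target' := fun y hy => (hfg y hy).1
      left_inv' := hgf
      right_inv' := fun y hy => (hfg y hy).2
      open_source := hU
      open_target := hfU
      continuousOn_toFun := hfc
      continuousOn_invFun := hgc }
  exact ⟨e, hxU, hUD, rfl⟩

theorem OpenPartialHomeomorph.mem_source_of_mem_closure {X Y : Type*} [TopologicalSpace X]
    [T2Space X] [TopologicalSpace Y] (e : OpenPartialHomeomorph X Y) {z : X}
    (hz : z ∈ closure e.source) (hez : ContinuousAt e z) (hzt : e z ∈ e.target) :
    z ∈ e.source := by
  have : (𝓝[e.source] z).NeBot := mem_closure_iff_nhdsWithin_neBot.mp hz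
  have hlim : Tendsto (fun w => e.symm (e w)) (𝓝[e.source] z) (𝓝 (e.symm (e z))) :=
    ((e.continuousAt_symm hzt).comp hez).continuousWithinAt
  have hz_eq : e.symm (e z) = z :=
    tendsto_nhds_unique
      (hlim.congr' (eventually_nhdsWithin_of_forall fun w hw => e.left_inv hw))
      (tendsto_nhdsWithin_of_tendsto_nhds tendsto_id)
  exact hz_eq ▸ e.map_target hzt

section expRay

variable {Y : Type*} [NormedAddCommGroup Y] [NormedSpace ℝ Y] {y₀ y : Y} {r s t : ℝ}

noncomputable def expRay (y₀ y : Y) (t : ℝ) : Y := y₀ + Real.exp (-t) • (y - y₀)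

theorem expRay_zero : expRay y₀ y 0 = y := by simp [expRay]

theorem expRay_expRay : expRay y₀ (expRay y₀ y t) s = expRay y₀ y (t + s) := by
  simp only [expRay, add_sub_cancel_left, smul_smul, ← Real.exp_add, neg_add]
  rw [add_comm (-s)]

theorem dist_expRay : dist (expRay y₀ y t) y₀ = Real.exp (-t) * dist y y₀ := by
  rw [expRay, dist_self_add_left, norm_smul, Real.norm_of_nonneg (Real.exp_pos _).le,
    dist_eq_norm]

theorem continuous_expRay : Continuous (expRay y₀ y) := by
  unfold expRay; fun_prop

theorem isUpperSet_expRay_mem_ball : IsUpperSet {t | expRay y₀ y t ∈ ball y₀ r} := by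
  intro s t hst hs
  simp only [mem_ofPred_eq, mem_ball, dist_expRay] at hs ⊢
  calc Real.exp (-t) * dist y y₀ ≤ Real.exp (-s) * dist y y₀ := by gcongr
    _ < r := hs

theorem eventually_expRay_mem_ball (hr : 0 < r) :
    ∀ᶠ t in atTop, expRay y₀ y t ∈ ball y₀ r := by
  have h := Real.tendsto_exp_neg_atTop_nhds_zero.mul_const (dist y y₀)
  rw [zero_mul] at h
  filter_upwards [h.eventually (gt_mem_nhds hr)] with t ht
  rwa [mem_ball, dist_expRay]

end expRay

namespace AuxFlow

variable {X Y : Type*} [NormedAddCommGroup X] [NormedSpace ℝ X]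
  [NormedAddCommGroup Y] [NormedSpace ℝ Y] {D : Set X} {x₀ x : X} {t : ℝ}

section

variable {f : X → Y} (F : AuxFlow D f x₀)

def IsForwardComplete : Prop := ∀ x ∈ D, ∀ t : ℝ, 0 ≤ t → (x, t) ∈ F.dom

def basin (W : Set X) : Set X := {x ∈ D | ∃ t, 0 ≤ t ∧ F.flow x t ∈ W}

theorem f_flow (h : (x, t) ∈ F.dom) : f (F.flow x t) = expRay (f x₀) (f x) t :=
  F.lifts _ h

theorem flow_flow_neg (hx : x ∈ D) (h : (x, t) ∈ F.dom) : F.flow (F.flow x t) (-t) = x := by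
  have := (F.flow_add x t (-t) h (by simpa using F.zero_mem x hx)).2
  rwa [add_neg_cancel, F.flow_zero x hx] at this

theorem continuousAt_flow (h : (x, t) ∈ F.dom) : ContinuousAt (F.flow · t) x :=
  (F.continuousOn.continuousAt (F.isOpen_dom.mem_nhds h)).comp (f := fun x' => (x', t))
    (by fun_prop)

theorem isForwardComplete_of_lyapunov
    (hc : ∀ B : Set X, IsClosed B → Bornology.IsBounded B → B ⊆ D →
      ∀ x ∈ B, (∀ t : ℝ, 0 ≤ t → (x, t) ∈ F.dom → F.flow x t ∈ B) →
        ∀ t : ℝ, 0 ≤ t → (x, t) ∈ F.dom)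
    {k : X → ℝ} (hkcoercive : ∀ a : ℝ, 0 < a →
      Bornology.IsBounded {x ∈ D | k x ≤ a} ∧ closure {x ∈ D | k x ≤ a} ⊆ D)
    (hkdecr : ∀ x ∈ D, ∀ t₁ t₂ : ℝ, (x, t₁) ∈ F.dom → (x, t₂) ∈ F.dom → t₁ ≤ t₂ →
      k (F.flow x t₂) ≤ k (F.flow x t₁)) :
    F.IsForwardComplete := by
  intro x hx
  set a := max (k x) 1
  obtain ⟨hbdd, hsub⟩ := hkcoercive a (lt_max_of_lt_right one_pos)
  refine hc _ isClosed_closure hbdd.closure hsub x (subset_closure ⟨hx, le_max_left _ _⟩) ?_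
  intro t ht hxt
  refine subset_closure ⟨F.mem_of_dom _ hxt, le_trans ?_ (le_max_left (k x) 1)⟩
  simpa [F.flow_zero x hx] using hkdecr x hx 0 t (F.zero_mem x hx) hxt ht

theorem starConvex_image (hF : F.IsForwardComplete) (hx₀ : x₀ ∈ D) :
    StarConvex ℝ (f x₀) (f '' D) := by
  rw [starConvex_iff_forall_pos (mem_image_of_mem f hx₀)]
  rintro _ ⟨x, hx, rfl⟩ a b ha hb hab
  have hxt := hF x hx (-Real.log b) (neg_nonneg.2 (Real.log_nonpos hb.le (by linarith)))
  refine ⟨F.flow x (-Real.log b), F.mem_of_dom _ hxt, ?_⟩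
  rw [F.f_flow hxt, expRay, neg_neg, Real.exp_log hb, eq_sub_of_add_eq hab]
  module

theorem isOpen_basin (hF : F.IsForwardComplete) (hD : IsOpen D) {W : Set X} (hW : IsOpen W) :
    IsOpen (F.basin W) := by
  refine isOpen_iff_mem_nhds.2 fun x ⟨hx, t, ht, hxt⟩ => ?_
  filter_upwards [hD.mem_nhds hx,
    (F.continuousAt_flow (hF x hx t ht)).preimage_mem_nhds (hW.mem_nhds hxt)] with x' hx' hx't
  exact ⟨hx', t, ht, hx't⟩

end

section

variable {e : OpenPartialHomeomorph X Y} (F : AuxFlow D e x₀) {r : ℝ}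

theorem flow_eq_symm_expRay_of_mem_source (heD : e.source ⊆ D)
    (hr : ball (e x₀) r ⊆ e.target) {z : X} (hz : z ∈ e.source) (hzr : e z ∈ ball (e x₀) r) {s : ℝ}
    (hs : expRay (e x₀) (e z) s ∈ ball (e x₀) r) :
    F.flow z s = e.symm (expRay (e x₀) (e z) s) := by
  refine (F.maximal z (heD hz) _ isUpperSet_expRay_mem_ball.ordConnected
    (by rwa [mem_ofPred_eq, expRay_zero]) (fun s => e.symm (expRay (e x₀) (e z) s))
    (e.continuousOn_symm.comp continuous_expRay.continuousOn fun s hs => hr hs)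
    (by rw [expRay_zero, e.left_inv hz])
    (fun s hs => ⟨heD (e.map_target (hr hs)), e.right_inv (hr hs)⟩) s hs).2.symm

theorem flow_eq_symm_expRay (heD : e.source ⊆ D) (hr : ball (e x₀) r ⊆ e.target) {t₀ u : ℝ}
    (ht₀ : (x, t₀) ∈ F.dom) (hu : (x, u) ∈ F.dom)
    (h₀ : F.flow x t₀ ∈ e.source ∩ e ⁻¹' ball (e x₀) r)
    (hur : expRay (e x₀) (e x) u ∈ ball (e x₀) r) :
    F.flow x u = e.symm (expRay (e x₀) (e x) u) := by
  have hray : expRay (e x₀) (e (F.flow x t₀)) (u - t₀) = expRay (e x₀) (e x) u := by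
    rw [F.f_flow ht₀, expRay_expRay, add_sub_cancel]
  have hshift := (F.flow_add x t₀ (u - t₀) ht₀ (by rwa [add_sub_cancel])).2
  rw [add_sub_cancel] at hshift
  rw [← hshift, F.flow_eq_symm_expRay_of_mem_source heD hr h₀.1 h₀.2 (hray ▸ hur), hray]

theorem closure_basin_inter_subset (hF : F.IsForwardComplete) (he : ContinuousOn e D)
    (hD : IsOpen D) (heD : e.source ⊆ D) (hr0 : 0 < r) (hr : ball (e x₀) r ⊆ e.target) :
    closure (F.basin (e.source ∩ e ⁻¹' ball (e x₀) r)) ∩ D ⊆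
      F.basin (e.source ∩ e ⁻¹' ball (e x₀) r) := by
  set W := e.source ∩ e ⁻¹' ball (e x₀) r
  rintro x ⟨hxA, hx⟩
  obtain ⟨T, hT, hTr⟩ := ((eventually_ge_atTop 0).and
    (eventually_expRay_mem_ball (y₀ := e x₀) (y := e x) hr0)).exists
  have hex : ContinuousAt e x := he.continuousAt (hD.mem_nhds hx)
  -- one entry time `T` serves all points near `x`, so `Φ(x, T)` is a limit of points of `W`
  have hnear : ∀ᶠ x' in 𝓝 x, expRay (e x₀) (e x') T ∈ ball (e x₀) r :=
    (continuousAt_const.add (continuousAt_const.smul (hex.sub continuousAt_const))).eventually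
      (isOpen_ball.mem_nhds hTr)
  have : (𝓝[F.basin W] x).NeBot := mem_closure_iff_nhdsWithin_neBot.mp hxA
  have hcl : F.flow x T ∈ closure W := by
    refine mem_closure_of_tendsto (b := 𝓝[F.basin W] x)
      (F.continuousAt_flow (hF x hx T hT)).continuousWithinAt ?_
    filter_upwards [self_mem_nhdsWithin, nhdsWithin_le_nhds hnear]
      with x' ⟨hx', t₀, ht₀, h₀⟩ hx'r
    rw [F.flow_eq_symm_expRay heD hr (hF x' hx' t₀ ht₀) (hF x' hx' T hT) h₀ hx'r]
    exact ⟨e.map_target (hr hx'r), by rwa [mem_preimage, e.right_inv (hr hx'r)]⟩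
  have hxT := hF x hx T hT
  have hTr' : e (F.flow x T) ∈ ball (e x₀) r := by rwa [F.f_flow hxT]
  have hsrc : F.flow x T ∈ e.source := e.mem_source_of_mem_closure
    (closure_mono inter_subset_left hcl)
    (he.continuousAt (hD.mem_nhds (F.mem_of_dom _ hxT))) (hr hTr')
  exact ⟨hx, T, hT, hsrc, hTr'⟩

theorem subset_basin (hF : F.IsForwardComplete) (he : ContinuousOn e D)
    (hDc : IsPreconnected D) (hD : IsOpen D) (heD : e.source ⊆ D)
    (hx₀ : x₀ ∈ e.source) (hr0 : 0 < r) (hr : ball (e x₀) r ⊆ e.target) :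
    D ⊆ F.basin (e.source ∩ e ⁻¹' ball (e x₀) r) := by
  have hx₀W : F.flow x₀ 0 ∈ e.source ∩ e ⁻¹' ball (e x₀) r := by
    rw [F.flow_zero x₀ (heD hx₀)]
    exact ⟨hx₀, mem_ball_self hr0⟩
  exact hDc.subset_of_closure_inter_subset
    (F.isOpen_basin hF hD (e.isOpen_inter_preimage isOpen_ball))
    ⟨x₀, heD hx₀, heD hx₀, 0, le_rfl, hx₀W⟩ (F.closure_basin_inter_subset hF he hD heD hr0 hr)

end

theorem injOn {f : X → Y} (F : AuxFlow D f x₀) (hF : F.IsForwardComplete)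
    (hDc : IsPreconnected D) (hD : IsOpen D) (hf : IsLocalHomeoOn f D) (hx₀ : x₀ ∈ D) :
    InjOn f D := by
  obtain ⟨e, hx₀e, heD, rfl⟩ := hf.exists_openPartialHomeomorph hx₀
  obtain ⟨r, hr0, hr⟩ := Metric.isOpen_iff.1 e.open_target (e x₀) (e.map_source hx₀e)
  have hbasin := F.subset_basin hF hf.continuousOn hDc hD heD hx₀e hr0 hr
  intro x₁ hx₁ x₂ hx₂ hfx
  obtain ⟨-, t₁, ht₁, h₁⟩ := hbasin hx₁
  obtain ⟨-, t₂, ht₂, h₂⟩ := hbasin hx₂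
  obtain ⟨T, hT, hTr⟩ := ((eventually_ge_atTop 0).and
    (eventually_expRay_mem_ball (y₀ := e x₀) (y := e x₁) hr0)).exists
  have hflow : F.flow x₁ T = F.flow x₂ T := by
    rw [F.flow_eq_symm_expRay heD hr (hF _ hx₁ _ ht₁) (hF _ hx₁ _ hT) h₁ hTr,
      F.flow_eq_symm_expRay heD hr (hF _ hx₂ _ ht₂) (hF _ hx₂ _ hT) h₂ (hfx ▸ hTr), hfx]
  rw [← F.flow_flow_neg hx₁ (hF _ hx₁ _ hT), hflow, F.flow_flow_neg hx₂ (hF _ hx₂ _ hT)]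

end AuxFlow

theorem injOn_starShaped_of_lyapunov_general {X Y : Type*}
    [NormedAddCommGroup X] [NormedSpace ℝ X]
    [NormedAddCommGroup Y] [NormedSpace ℝ Y]
    (D : Set X) (hDopen : IsOpen D) (hDconn : IsConnected D)
    (f : X → Y) (hf : IsLocalHomeoOn f D) (x₀ : X) (hx₀ : x₀ ∈ D)
    (F : AuxFlow D f x₀)
    (hc : ∀ B : Set X, IsClosed B → Bornology.IsBounded B → B ⊆ D →
      ∀ x ∈ B, (∀ t : ℝ, 0 ≤ t → (x, t) ∈ F.dom → F.flow x t ∈ B) →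
        ∀ t : ℝ, 0 ≤ t → (x, t) ∈ F.dom)
    (k : X → ℝ)
    (hkcoercive : ∀ a : ℝ, 0 < a →
      Bornology.IsBounded {x ∈ D | k x ≤ a} ∧ closure {x ∈ D | k x ≤ a} ⊆ D)
    (hkdecr : ∀ x ∈ D, ∀ t₁ t₂ : ℝ, (x, t₁) ∈ F.dom → (x, t₂) ∈ F.dom → t₁ ≤ t₂ →
      k (F.flow x t₂) ≤ k (F.flow x t₁)) :
    Set.InjOn f D ∧
      ∀ y ∈ f '' D, ∀ s ∈ Set.Icc (0 : ℝ) 1, f x₀ + s • (y - f x₀) ∈ f '' D := by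
  have hF := F.isForwardComplete_of_lyapunov hc hkcoercive hkdecr
  exact ⟨F.injOn hF hDconn.isPreconnected hDopen hf hx₀,
    fun y hy s hs => (F.starConvex_image hF hx₀).add_smul_sub_mem hy hs.1 hs.2⟩

/-- Injectivity and star-shaped image via a global Lyapunov function: if trajectories
trapped in closed bounded subsets of `D` are global in the future (condition (c)) and
the auxiliary flow admits a global Lyapunov function, then `f` is injective on `D` and
`f(D)` is star-shaped with respect to `f(x₀)`. -/
theorem injOn_starShaped_of_lyapunov {X Y : Type*}
    [NormedAddCommGroup X] [NormedSpace ℝ X] [CompleteSpace X]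
    [NormedAddCommGroup Y] [NormedSpace ℝ Y] [CompleteSpace Y]
    (D : Set X) (hDopen : IsOpen D) (hDne : D.Nonempty) (hDconn : IsConnected D)
    (f : X → Y) (hf : IsLocalHomeoOn f D) (x₀ : X) (hx₀ : x₀ ∈ D)
    (F : AuxFlow D f x₀)
    (hc : ∀ B : Set X, IsClosed B → Bornology.IsBounded B → B ⊆ D →
      ∀ x ∈ B, (∀ t : ℝ, 0 ≤ t → (x, t) ∈ F.dom → F.flow x t ∈ B) →
        ∀ t : ℝ, 0 ≤ t → (x, t) ∈ F.dom)
    (k : X → ℝ) (hkcont : ContinuousOn k D) (hknonneg : ∀ x ∈ D, 0 ≤ k x)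
    (hkcoercive : ∀ a : ℝ, 0 < a →
      Bornology.IsBounded {x ∈ D | k x ≤ a} ∧ closure {x ∈ D | k x ≤ a} ⊆ D)
    (hkdecr : ∀ x ∈ D, ∀ t₁ t₂ : ℝ, (x, t₁) ∈ F.dom → (x, t₂) ∈ F.dom → t₁ ≤ t₂ →
      k (F.flow x t₂) ≤ k (F.flow x t₁)) :
    Set.InjOn f D ∧
      ∀ y ∈ f '' D, ∀ s ∈ Set.Icc (0 : ℝ) 1, f x₀ + s • (y - f x₀) ∈ f '' D :=
  injOn_starShaped_of_lyapunov_general D hDopen hDconn f hf x₀ hx₀ F hc k hkcoercive hkdecr
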